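/- arXiv:2302.12761 — 3 statements merged into one kernel-verified Lean document; each statement's English description precedes it below -/
import Mathlib

section
/- Let B ∈ ℝ^{m×n} have SVD B = U diag(Σ₁, Σ₂) [V₁ V₂]^T where Σ₁ is r × r, and let Ω ∈ ℝ^{n×(r+p)}. If V₁^T Ω has full row rank, then ‖(I − P_{BΩ}) B‖_F² ≤ ‖Σ₂‖_F² + ‖Σ₂ (V₂^T Ω)(V₁^T Ω)^†‖_F², where P_{BΩ} = (BΩ)(BΩ)^† is the orthogonal projector onto the range of BΩ. -/
open MeasureTheory ProbabilityTheory Real Matrix Filter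

/-- Frobenius norm of a real matrix. -/
noncomputable def frob {m n : Type*} [Fintype m] [Fintype n]
    (M : Matrix m n ℝ) : ℝ :=
  Real.sqrt (∑ i, ∑ j, (M i j) ^ 2)

/-- The four Penrose conditions characterizing the Moore–Penrose pseudoinverse. -/
def IsMoorePenrose {m n : Type*} [Fintype m] [Fintype n]
    (M : Matrix m n ℝ) (Md : Matrix n m ℝ) : Prop :=
  M * Md * M = M ∧ Md * M * Md = Md ∧ (M * Md)ᵀ = M * Md ∧ (Md * M)ᵀ = Md * M

/-- The Moore–Penrose pseudoinverse of a real matrix (it exists and is unique). -/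
noncomputable def pinv {m n : Type*} [Fintype m] [Fintype n]
    (M : Matrix m n ℝ) : Matrix n m ℝ :=
  open scoped Classical in
  if h : ∃ Md, IsMoorePenrose M Md then h.choose else 0

/-! ### Auxiliary lemmas -/

noncomputable def frobSq {m n : Type*} [Fintype m] [Fintype n] (M : Matrix m n ℝ) : ℝ :=
  ∑ i, ∑ j, (M i j) ^ 2

lemma frob_sq_eq {m n : Type*} [Fintype m] [Fintype n] (M : Matrix m n ℝ) :
    frob M ^ 2 = frobSq M := by
  have h : 0 ≤ frobSq M := by
    apply Finset.sum_nonneg; intro i _; apply Finset.sum_nonneg; intro j _; positivity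
  exact Real.sq_sqrt h

lemma frobSq_nonneg {m n : Type*} [Fintype m] [Fintype n] (M : Matrix m n ℝ) :
    0 ≤ frobSq M := by
  apply Finset.sum_nonneg; intro i _; apply Finset.sum_nonneg; intro j _; positivity

lemma frobSq_eq_trace {m n : Type*} [Fintype m] [Fintype n] (M : Matrix m n ℝ) :
    frobSq M = (Mᵀ * M).trace := by
  simp [frobSq, Matrix.trace, Matrix.mul_apply, Matrix.diag, sq]
  rw [Finset.sum_comm]

lemma frobSq_eq_trace' {m n : Type*} [Fintype m] [Fintype n] (M : Matrix m n ℝ) :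
    frobSq M = (M * Mᵀ).trace := by
  rw [frobSq_eq_trace, Matrix.trace_mul_comm]

lemma transpose_mul_self_eq_zero {m n : Type*} [Fintype m] [Fintype n]
    {M : Matrix m n ℝ} (h : Mᵀ * M = 0) : M = 0 := by
  ext i j
  have hd : (Mᵀ * M) j j = 0 := by rw [h]; rfl
  have hsum : ∑ k, M k j ^ 2 = 0 := by simpa [Matrix.mul_apply, sq] using hd
  have := (Finset.sum_eq_zero_iff_of_nonneg (fun k _ => sq_nonneg (M k j))).mp hsum i
    (Finset.mem_univ i)
  simpa using pow_eq_zero_iff (n := 2) (by norm_num) |>.mp this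

/-- Every real matrix admits a Moore–Penrose pseudoinverse. -/
lemma exists_isMoorePenrose {m n : Type*} [Fintype m] [Fintype n] [DecidableEq n]
    (A : Matrix m n ℝ) : ∃ Md : Matrix n m ℝ, IsMoorePenrose A Md := by
  classical
  set S : Matrix n n ℝ := Aᵀ * A with hSdef
  have hS : S.IsHermitian := by
    simpa [conjTranspose_eq_transpose_of_trivial] using isHermitian_conjTranspose_mul_self A
  have hSsymm : Sᵀ = S := by
    simpa [conjTranspose_eq_transpose_of_trivial] using hS.eq
  set W : Matrix n n ℝ := (hS.eigenvectorUnitary : Matrix n n ℝ) with hW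
  have hWW : Wᵀ * W = 1 := by
    have h := (Matrix.mem_unitaryGroup_iff').mp hS.eigenvectorUnitary.2
    simp only [star_eq_conjTranspose, conjTranspose_eq_transpose_of_trivial] at h
    exact h
  set lam : n → ℝ := hS.eigenvalues with hlam
  have hspec : S = W * diagonal lam * Wᵀ := by
    have h := hS.spectral_theorem
    simp only [Unitary.conjStarAlgAut_apply, star_eq_conjTranspose, conjTranspose_eq_transpose_of_trivial,
      RCLike.ofReal_real_eq_id, Function.id_comp] at h
    exact h
  set P : Matrix n n ℝ := W * diagonal (fun i => (lam i)⁻¹) * Wᵀ with hP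
  have key : ∀ f g : n → ℝ,
      (W * diagonal f * Wᵀ) * (W * diagonal g * Wᵀ)
        = W * diagonal (fun i => f i * g i) * Wᵀ := by
    intro f g
    simp only [mul_assoc]
    rw [← mul_assoc Wᵀ W, hWW, one_mul, ← mul_assoc (diagonal f), diagonal_mul_diagonal]
  have hSP : S * P = W * diagonal (fun i => lam i * (lam i)⁻¹) * Wᵀ := by
    rw [hspec, hP, key]
  have hPS : P * S = W * diagonal (fun i => lam i * (lam i)⁻¹) * Wᵀ := by
    rw [hspec, hP, key]
    have : (fun i => (lam i)⁻¹ * lam i) = fun i => lam i * (lam i)⁻¹ := by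
      funext i; ring
    rw [this]
  have hsymm_aux : ∀ f : n → ℝ, (W * diagonal f * Wᵀ)ᵀ = W * diagonal f * Wᵀ := by
    intro f
    rw [transpose_mul, transpose_mul, transpose_transpose, diagonal_transpose, mul_assoc]
  have hPsymm : Pᵀ = P := hsymm_aux _
  have hPSsymm : (P * S)ᵀ = P * S := by rw [hPS]; exact hsymm_aux _
  have hSPS : S * (P * S) = S := by
    rw [← mul_assoc, hSP, hspec, key]
    have : (fun i => lam i * (lam i)⁻¹ * lam i) = lam := by
      funext i; rcases eq_or_ne (lam i) 0 with h | h <;> field_simp [h]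
    rw [this]
  have hPSP : P * S * P = P := by
    rw [hPS, hP, key]
    have : (fun i => lam i * (lam i)⁻¹ * (lam i)⁻¹) = fun i => (lam i)⁻¹ := by
      funext i; rcases eq_or_ne (lam i) 0 with h | h <;> field_simp [h]
    rw [this]
  set E : Matrix n n ℝ := 1 - P * S with hE
  have hSE : S * E = 0 := by
    rw [hE, mul_sub, mul_one, hSPS, sub_self]
  have hAE : A * E = 0 := by
    apply transpose_mul_self_eq_zero
    rw [transpose_mul, Matrix.mul_assoc, ← Matrix.mul_assoc Aᵀ A E, ← hSdef, hSE,
      Matrix.mul_zero]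
  have hAPS : A * (P * S) = A := by
    have h2 : A * E = A - A * (P * S) := by rw [hE, Matrix.mul_sub, Matrix.mul_one]
    rw [h2] at hAE
    exact (sub_eq_zero.mp hAE).symm
  refine ⟨P * Aᵀ, ?_, ?_, ?_, ?_⟩
  · calc A * (P * Aᵀ) * A = A * (P * (Aᵀ * A)) := by simp only [Matrix.mul_assoc]
      _ = A := by rw [← hSdef]; exact hAPS
  · calc P * Aᵀ * A * (P * Aᵀ) = P * (Aᵀ * A) * P * Aᵀ := by simp only [Matrix.mul_assoc]
      _ = P * Aᵀ := by rw [← hSdef, hPSP]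
  · rw [transpose_mul, transpose_mul, transpose_transpose, hPsymm, hP]
    simp only [Matrix.mul_assoc]
  · rw [Matrix.mul_assoc, ← hSdef]; exact hPSsymm

lemma isMoorePenrose_pinv {m n : Type*} [Fintype m] [Fintype n] [DecidableEq n]
    (A : Matrix m n ℝ) : IsMoorePenrose A (pinv A) := by
  classical
  have h : ∃ Md, IsMoorePenrose A Md := exists_isMoorePenrose A
  rw [pinv, dif_pos h]
  exact h.choose_spec

/-- A matrix with full row rank satisfies `A * A† = 1`. -/
lemma mul_pinv_of_full_rank {r : ℕ} {k : Type*} [Fintype k] [DecidableEq k]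
    (A : Matrix (Fin r) k ℝ) (h : A.rank = r) : A * pinv A = 1 := by
  obtain ⟨h1, -, -, -⟩ := isMoorePenrose_pinv A
  have hsurj : Function.Surjective A.mulVecLin := by
    rw [← LinearMap.range_eq_top]
    apply Submodule.eq_top_of_finrank_eq
    rw [show Module.finrank ℝ (LinearMap.range A.mulVecLin) = A.rank from rfl, h]
    simp
  have hv : ∀ v, (A * pinv A) *ᵥ v = v := by
    intro v
    obtain ⟨x, hx⟩ := hsurj v
    have hx' : A *ᵥ x = v := hx
    calc (A * pinv A) *ᵥ v = (A * pinv A) *ᵥ (A *ᵥ x) := by rw [hx']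
      _ = (A * pinv A * A) *ᵥ x := by simp only [Matrix.mulVec_mulVec]
      _ = v := by rw [h1, hx']
  ext i j
  have := congrFun (hv (Pi.single j 1)) i
  simpa [Matrix.mulVec_single, Matrix.one_apply, Pi.single_apply, eq_comm] using this

lemma frobSq_unit_mul {m n : Type*} [Fintype m] [Fintype n] [DecidableEq m]
    {U : Matrix m m ℝ} (hU : Uᵀ * U = 1) (M : Matrix m n ℝ) :
    frobSq (U * M) = frobSq M := by
  rw [frobSq_eq_trace, frobSq_eq_trace, transpose_mul, Matrix.mul_assoc,
    ← Matrix.mul_assoc Uᵀ U M, hU, Matrix.one_mul]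

lemma frobSq_proj_mul_le {m n : Type*} [Fintype m] [Fintype n] [DecidableEq m]
    {P : Matrix m m ℝ} (hsym : Pᵀ = P) (hidem : P * P = P) (M : Matrix m n ℝ) :
    frobSq (P * M) ≤ frobSq M := by
  have haux : ∀ Q : Matrix m m ℝ, Qᵀ = Q → Q * Q = Q →
      frobSq (Q * M) = (Mᵀ * Q * M).trace := by
    intro Q hs hi
    rw [frobSq_eq_trace, transpose_mul, Matrix.mul_assoc, ← Matrix.mul_assoc Qᵀ Q M,
      hs, hi, Matrix.mul_assoc]
  have hsym' : (1 - P)ᵀ = 1 - P := by rw [transpose_sub, transpose_one, hsym]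
  have hidem' : (1 - P) * (1 - P) = 1 - P := by
    rw [sub_mul, one_mul, mul_sub, mul_one, hidem]; abel
  have h1 := haux P hsym hidem
  have h2 := haux (1 - P) hsym' hidem'
  have hsum : frobSq (P * M) + frobSq ((1 - P) * M) = frobSq M := by
    rw [h1, h2, Matrix.mul_sub, Matrix.mul_one, Matrix.sub_mul, Matrix.trace_sub,
      frobSq_eq_trace]
    ring
  nlinarith [frobSq_nonneg ((1 - P) * M)]

lemma fromRows_sub {m₁ m₂ n : Type*} (A₁ C₁ : Matrix m₁ n ℝ) (A₂ C₂ : Matrix m₂ n ℝ) :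
    fromRows A₁ A₂ - fromRows C₁ C₂ = fromRows (A₁ - C₁) (A₂ - C₂) := by
  ext (i | i) j <;> simp

lemma frobSq_fromRows {m₁ m₂ n : Type*} [Fintype m₁] [Fintype m₂] [Fintype n]
    (A : Matrix m₁ n ℝ) (B : Matrix m₂ n ℝ) :
    frobSq (fromRows A B) = frobSq A + frobSq B := by
  simp [frobSq, Fintype.sum_sum_type]

/-- Structural bound for the HMT (randomized SVD) approximation error
(HMT Theorem 9.1): if `V₁ᵀ Ω` has full row rank then
`‖(I − P_{BΩ})B‖_F² ≤ ‖S₂‖_F² + ‖S₂ (V₂ᵀΩ)(V₁ᵀΩ)†‖_F²`. -/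
theorem hmt_structural_bound {r p m' s' : ℕ}
    (U : Matrix (Fin r ⊕ Fin m') (Fin r ⊕ Fin m') ℝ)
    (d₁ : Fin r → ℝ) (S₂ : Matrix (Fin m') (Fin s') ℝ)
    (V₁ : Matrix (Fin r ⊕ Fin s') (Fin r) ℝ)
    (V₂ : Matrix (Fin r ⊕ Fin s') (Fin s') ℝ)
    (B : Matrix (Fin r ⊕ Fin m') (Fin r ⊕ Fin s') ℝ)
    (Ω : Matrix (Fin r ⊕ Fin s') (Fin (r + p)) ℝ)
    (hU : Uᵀ * U = 1)
    (hV : (fromCols V₁ V₂)ᵀ * fromCols V₁ V₂ = 1)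
    (hB : B = U * fromBlocks (diagonal d₁) 0 0 S₂ * (fromCols V₁ V₂)ᵀ)
    (hS2diag : ∀ (i : Fin m') (j : Fin s'), (i : ℕ) ≠ (j : ℕ) → S₂ i j = 0)
    (hd₁pos : ∀ i, 0 ≤ d₁ i) (hS₂pos : ∀ i j, 0 ≤ S₂ i j)
    (hd₁mono : ∀ i j : Fin r, i ≤ j → d₁ j ≤ d₁ i)
    (hcross : ∀ i j k, S₂ i j ≤ d₁ k)
    (hrank : (V₁ᵀ * Ω).rank = r) :
    frob ((1 - (B * Ω) * pinv (B * Ω)) * B) ^ 2 ≤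
      frob S₂ ^ 2 + frob (S₂ * (V₂ᵀ * Ω) * pinv (V₁ᵀ * Ω)) ^ 2 := by
  classical
  -- block orthogonality relations
  have hVb : fromBlocks (V₁ᵀ * V₁) (V₁ᵀ * V₂) (V₂ᵀ * V₁) (V₂ᵀ * V₂)
      = (1 : Matrix (Fin r ⊕ Fin s') (Fin r ⊕ Fin s') ℝ) := by
    rw [← fromRows_mul_fromCols, ← transpose_fromCols, hV]
  have h11 : V₁ᵀ * V₁ = 1 := by
    ext i j
    have := congrFun (congrFun hVb (Sum.inl i)) (Sum.inl j)
    simpa [Matrix.one_apply] using this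
  have h12 : V₁ᵀ * V₂ = 0 := by
    ext i j
    have := congrFun (congrFun hVb (Sum.inl i)) (Sum.inr j)
    simpa [Matrix.one_apply] using this
  have h21 : V₂ᵀ * V₁ = 0 := by
    ext i j
    have := congrFun (congrFun hVb (Sum.inr i)) (Sum.inl j)
    simpa [Matrix.one_apply] using this
  have h22 : V₂ᵀ * V₂ = 1 := by
    ext i j
    have := congrFun (congrFun hVb (Sum.inr i)) (Sum.inr j)
    simpa [Matrix.one_apply] using this
  set D : Matrix (Fin r) (Fin r) ℝ := diagonal d₁ with hD
  set Ω₁ : Matrix (Fin r) (Fin (r + p)) ℝ := V₁ᵀ * Ω with hΩ₁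
  set Ω₂ : Matrix (Fin s') (Fin (r + p)) ℝ := V₂ᵀ * Ω with hΩ₂
  set N : Matrix (Fin m') (Fin r) ℝ := S₂ * Ω₂ * pinv Ω₁ with hN
  set Y : Matrix (Fin r ⊕ Fin m') (Fin (r + p)) ℝ := B * Ω with hY
  obtain ⟨hY1, -, hY3, -⟩ := isMoorePenrose_pinv Y
  set Pr : Matrix (Fin r ⊕ Fin m') (Fin r ⊕ Fin m') ℝ := Y * pinv Y with hPr
  have hPrsym : Prᵀ = Pr := hY3
  have hPr2 : Pr * Pr = Pr := by
    calc Pr * Pr = (Y * pinv Y * Y) * pinv Y := by simp only [hPr, Matrix.mul_assoc]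
      _ = Pr := by rw [hY1, hPr]
  have hPisym : (1 - Pr)ᵀ = 1 - Pr := by rw [transpose_sub, transpose_one, hPrsym]
  have hPi2 : (1 - Pr) * (1 - Pr) = 1 - Pr := by
    rw [sub_mul, one_mul, mul_sub, mul_one, hPr2]; abel
  have hPiY : (1 - Pr) * Y = 0 := by
    rw [Matrix.sub_mul, Matrix.one_mul, hPr, Matrix.mul_assoc]
    rw [← Matrix.mul_assoc Y (pinv Y) Y, hY1, sub_self]
  -- row decompositions
  have hBrows : B = U * fromRows (D * V₁ᵀ) (S₂ * V₂ᵀ) := by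
    rw [hB, transpose_fromCols, Matrix.mul_assoc, fromBlocks_mul_fromRows]
    simp
  have hYrows : Y = U * fromRows (D * Ω₁) (S₂ * Ω₂) := by
    rw [hY, hBrows, Matrix.mul_assoc, fromRows_mul, hΩ₁, hΩ₂]
    simp only [Matrix.mul_assoc]
  have hΩpinv : Ω₁ * pinv Ω₁ = 1 := mul_pinv_of_full_rank Ω₁ hrank
  -- the comparison matrix
  have c1 : D * Ω₁ * (pinv Ω₁ * V₁ᵀ) = D * V₁ᵀ := by
    calc D * Ω₁ * (pinv Ω₁ * V₁ᵀ) = D * (Ω₁ * pinv Ω₁) * V₁ᵀ := by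
          simp only [Matrix.mul_assoc]
      _ = D * V₁ᵀ := by rw [hΩpinv, Matrix.mul_one]
  have c2 : S₂ * Ω₂ * (pinv Ω₁ * V₁ᵀ) = N * V₁ᵀ := by
    calc S₂ * Ω₂ * (pinv Ω₁ * V₁ᵀ) = S₂ * Ω₂ * pinv Ω₁ * V₁ᵀ := by
          simp only [Matrix.mul_assoc]
      _ = N * V₁ᵀ := by rw [hN]
  have hA' : Y * (pinv Ω₁ * V₁ᵀ) = U * fromRows (D * V₁ᵀ) (N * V₁ᵀ) := by
    rw [hYrows, Matrix.mul_assoc, fromRows_mul, c1, c2]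
  have hdiff : B - Y * (pinv Ω₁ * V₁ᵀ) =
      U * fromRows (0 : Matrix (Fin r) (Fin r ⊕ Fin s') ℝ) (S₂ * V₂ᵀ - N * V₁ᵀ) := by
    rw [hBrows, hA', ← Matrix.mul_sub, fromRows_sub, sub_self]
  have hPiB : (1 - Pr) * B = (1 - Pr) * (B - Y * (pinv Ω₁ * V₁ᵀ)) := by
    rw [Matrix.mul_sub, ← Matrix.mul_assoc, hPiY, Matrix.zero_mul, sub_zero]
  -- the Frobenius computation for the comparison matrix
  set M : Matrix (Fin m') (Fin r ⊕ Fin s') ℝ := S₂ * V₂ᵀ - N * V₁ᵀ with hM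
  have e1 : S₂ * V₂ᵀ * (V₂ * S₂ᵀ) = S₂ * S₂ᵀ := by
    rw [Matrix.mul_assoc, ← Matrix.mul_assoc V₂ᵀ V₂ S₂ᵀ, h22, Matrix.one_mul]
  have e2 : S₂ * V₂ᵀ * (V₁ * Nᵀ) = 0 := by
    rw [Matrix.mul_assoc, ← Matrix.mul_assoc V₂ᵀ V₁ Nᵀ, h21, Matrix.zero_mul,
      Matrix.mul_zero]
  have e3 : N * V₁ᵀ * (V₂ * S₂ᵀ) = 0 := by
    rw [Matrix.mul_assoc, ← Matrix.mul_assoc V₁ᵀ V₂ S₂ᵀ, h12, Matrix.zero_mul,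
      Matrix.mul_zero]
  have e4 : N * V₁ᵀ * (V₁ * Nᵀ) = N * Nᵀ := by
    rw [Matrix.mul_assoc, ← Matrix.mul_assoc V₁ᵀ V₁ Nᵀ, h11, Matrix.one_mul]
  have hMM : M * Mᵀ = S₂ * S₂ᵀ + N * Nᵀ := by
    rw [hM, transpose_sub, transpose_mul, transpose_mul, transpose_transpose,
      transpose_transpose, Matrix.sub_mul, Matrix.mul_sub, Matrix.mul_sub, e1, e2, e3, e4]
    abel
  have hfM : frobSq M = frobSq S₂ + frobSq N := by
    rw [frobSq_eq_trace', hMM, Matrix.trace_add, ← frobSq_eq_trace', ← frobSq_eq_trace']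
  -- put everything together
  rw [frob_sq_eq, frob_sq_eq, frob_sq_eq]
  calc frobSq ((1 - Y * pinv Y) * B) = frobSq ((1 - Pr) * (B - Y * (pinv Ω₁ * V₁ᵀ))) := by
        rw [← hPr, hPiB]
    _ ≤ frobSq (B - Y * (pinv Ω₁ * V₁ᵀ)) := frobSq_proj_mul_le hPisym hPi2 _
    _ = frobSq (fromRows (0 : Matrix (Fin r) (Fin r ⊕ Fin s') ℝ) M) := by
        rw [hdiff, frobSq_unit_mul hU]
    _ = frobSq S₂ + frobSq N := by
        rw [frobSq_fromRows, hfM]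
        simp [frobSq]
end

section
/- Let B ∈ ℝ^{m×n}, Ω ∈ ℝ^{n×(r+p)}, Ψ ∈ ℝ^{m×(r+p+ℓ)}, and suppose Ψ^T B Ω has full column rank. Let Q be an orthonormal basis of range(BΩ) and Q⊥ an orthonormal basis of its orthogonal complement. Then ‖(I − P_{BΩ,Ψ}) B‖_F² = ‖(I − QQ^T) B‖_F² + ‖(Ψ^T Q)^† (Ψ^T Q⊥)(Q⊥^T B)‖_F², where P_{BΩ,Ψ} = BΩ (Ψ^T B Ω)^† Ψ^T. -/
open MeasureTheory ProbabilityTheory Real Matrix Filter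

lemma pinv_unique' {m n : Type*} [Fintype m] [Fintype n]
    {M : Matrix m n ℝ} {X Y : Matrix n m ℝ}
    (hX : IsMoorePenrose M X) (hY : IsMoorePenrose M Y) : X = Y := by
  obtain ⟨hX1, hX2, hX3, hX4⟩ := hX
  obtain ⟨hY1, hY2, hY3, hY4⟩ := hY
  have hA : X = X * M * Y := by
    calc X = X * M * X := hX2.symm
    _ = X * (M * X) := by rw [Matrix.mul_assoc]
    _ = X * (M * X)ᵀ := by rw [hX3]
    _ = X * (M * Y * M * X)ᵀ := by rw [hY1]
    _ = X * ((M * Y) * (M * X))ᵀ := by rw [Matrix.mul_assoc (M * Y) M X]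
    _ = X * ((M * X)ᵀ * (M * Y)ᵀ) := by rw [Matrix.transpose_mul]
    _ = X * ((M * X) * (M * Y)) := by rw [hX3, hY3]
    _ = (X * M * X) * (M * Y) := by simp only [Matrix.mul_assoc]
    _ = X * (M * Y) := by rw [hX2]
    _ = X * M * Y := (Matrix.mul_assoc X M Y).symm
  have hB : Y = X * M * Y := by
    calc Y = Y * M * Y := hY2.symm
    _ = (Y * M)ᵀ * Y := by rw [hY4]
    _ = (Y * (M * X * M))ᵀ * Y := by rw [hX1]
    _ = ((Y * M) * (X * M))ᵀ * Y := by simp only [Matrix.mul_assoc]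
    _ = ((X * M)ᵀ * (Y * M)ᵀ) * Y := by rw [Matrix.transpose_mul]
    _ = ((X * M) * (Y * M)) * Y := by rw [hX4, hY4]
    _ = X * M * (Y * M * Y) := by simp only [Matrix.mul_assoc]
    _ = X * M * Y := by rw [hY2]
  rw [hA, ← hB]

lemma pinv_eq_of_isMoorePenrose {m n : Type*} [Fintype m] [Fintype n]
    {M : Matrix m n ℝ} {Md : Matrix n m ℝ}
    (h : IsMoorePenrose M Md) : pinv M = Md := by
  have hex : ∃ X, IsMoorePenrose M X := ⟨Md, h⟩
  rw [pinv, dif_pos hex]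
  exact pinv_unique' hex.choose_spec h

lemma isUnit_det_of_rank_eq_card {k : Type*} [Fintype k] [DecidableEq k]
    (A : Matrix k k ℝ) (h : A.rank = Fintype.card k) : IsUnit A.det := by
  have htop : LinearMap.range A.mulVecLin = ⊤ := by
    apply Submodule.eq_top_of_finrank_eq
    rw [Module.finrank_pi]
    exact h
  have hsurj : Function.Surjective A.mulVecLin := LinearMap.range_eq_top.mp htop
  have hinj : Function.Injective A.mulVecLin :=
    (LinearMap.injective_iff_surjective (f := A.mulVecLin)).mpr hsurj
  have : Function.Injective A.mulVec := by
    rwa [Matrix.coe_mulVecLin] at hinj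
  exact A.isUnit_iff_isUnit_det.mp (Matrix.mulVec_injective_iff_isUnit.mp this)

section MPfacts

variable {a b : Type*} [Fintype a] [Fintype b] [DecidableEq b]

lemma leftinv_mul (S : Matrix a b ℝ) (hG : IsUnit (Sᵀ * S).det) :
    ((Sᵀ * S)⁻¹ * Sᵀ) * S = 1 := by
  rw [Matrix.mul_assoc, Matrix.nonsing_inv_mul _ hG]

lemma SN_symm (S : Matrix a b ℝ) (hG : IsUnit (Sᵀ * S).det) :
    (S * ((Sᵀ * S)⁻¹ * Sᵀ))ᵀ = S * ((Sᵀ * S)⁻¹ * Sᵀ) := by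
  have hGsymm : ((Sᵀ * S)⁻¹)ᵀ = (Sᵀ * S)⁻¹ := by
    rw [Matrix.transpose_nonsing_inv, Matrix.transpose_mul, Matrix.transpose_transpose]
  rw [Matrix.transpose_mul, Matrix.transpose_mul, hGsymm, Matrix.transpose_transpose,
    Matrix.mul_assoc]

lemma isMP_fullColRank (S : Matrix a b ℝ) (hG : IsUnit (Sᵀ * S).det) :
    IsMoorePenrose S ((Sᵀ * S)⁻¹ * Sᵀ) := by
  set N := (Sᵀ * S)⁻¹ * Sᵀ with hN
  have hNS : N * S = 1 := leftinv_mul S hG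
  refine ⟨?_, ?_, SN_symm S hG, ?_⟩
  · rw [Matrix.mul_assoc, hNS, Matrix.mul_one]
  · rw [hNS, Matrix.one_mul]
  · rw [hNS, Matrix.transpose_one]

lemma isMP_fullColRank_mul (S : Matrix a b ℝ) (R : Matrix b b ℝ)
    (hG : IsUnit (Sᵀ * S).det) (hR : IsUnit R.det) :
    IsMoorePenrose (S * R) (R⁻¹ * ((Sᵀ * S)⁻¹ * Sᵀ)) := by
  set N := (Sᵀ * S)⁻¹ * Sᵀ with hN
  have hNS : N * S = 1 := leftinv_mul S hG
  have h1 : (S * R) * (R⁻¹ * N) = S * N := by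
    rw [Matrix.mul_assoc, ← Matrix.mul_assoc R R⁻¹ N,
      Matrix.mul_nonsing_inv _ hR, Matrix.one_mul]
  have h2 : (R⁻¹ * N) * (S * R) = 1 := by
    rw [Matrix.mul_assoc, ← Matrix.mul_assoc N S R, hNS, Matrix.one_mul,
      Matrix.nonsing_inv_mul _ hR]
  refine ⟨?_, ?_, ?_, ?_⟩
  · rw [h1, Matrix.mul_assoc S N (S * R), ← Matrix.mul_assoc N S R, hNS,
      Matrix.one_mul]
  · rw [Matrix.mul_assoc, ← Matrix.mul_assoc (R⁻¹ * N) (S * R) (R⁻¹ * N), h2,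
      Matrix.one_mul]
  · rw [h1]; exact SN_symm S hG
  · rw [h2, Matrix.transpose_one]

end MPfacts

lemma frob_sq_eq_trace {m n : Type*} [Fintype m] [Fintype n]
    (M : Matrix m n ℝ) : frob M ^ 2 = Matrix.trace (Mᵀ * M) := by
  rw [frob, Real.sq_sqrt (by positivity)]
  rw [Matrix.trace]
  simp only [Matrix.diag, Matrix.mul_apply, Matrix.transpose_apply]
  rw [Finset.sum_comm]
  simp [sq]

lemma frob_sub_sq {m n : Type*} [Fintype m] [Fintype n]
    (E F : Matrix m n ℝ) (h : Eᵀ * F = 0) :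
    frob (E - F) ^ 2 = frob E ^ 2 + frob F ^ 2 := by
  have h2 : Fᵀ * E = 0 := by
    have := congrArg Matrix.transpose h
    simpa [Matrix.transpose_mul] using this
  simp only [frob_sq_eq_trace, Matrix.transpose_sub, Matrix.sub_mul, Matrix.mul_sub,
    h, h2, sub_zero, zero_sub, Matrix.trace_sub, Matrix.trace_neg]
  ring

/-- Structural identity for the generalized Nyström approximation error
(Tropp et al., Lemmas A3/A4): if `ΨᵀBΩ` has full column rank, `Q` is an
orthonormal basis of `range(BΩ)` and `Q⊥` of its orthogonal complement, then
`‖(I − P_{BΩ,Ψ})B‖_F² = ‖(I − QQᵀ)B‖_F² + ‖(ΨᵀQ)†(ΨᵀQ⊥)(Q⊥ᵀB)‖_F²`. -/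
theorem nystrom_structural_identity {r p ℓ m₂ n : ℕ}
    (B : Matrix (Fin (r + p) ⊕ Fin m₂) (Fin n) ℝ)
    (Ω : Matrix (Fin n) (Fin (r + p)) ℝ)
    (Ψ : Matrix (Fin (r + p) ⊕ Fin m₂) (Fin (r + p + ℓ)) ℝ)
    (Q : Matrix (Fin (r + p) ⊕ Fin m₂) (Fin (r + p)) ℝ)
    (Qp : Matrix (Fin (r + p) ⊕ Fin m₂) (Fin m₂) ℝ)
    (R : Matrix (Fin (r + p)) (Fin (r + p)) ℝ)
    (hQ : Qᵀ * Q = 1) (hQp : Qpᵀ * Qp = 1) (hQQp : Qᵀ * Qp = 0)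
    (hcomplete : Q * Qᵀ + Qp * Qpᵀ = 1)
    (hR : IsUnit R.det) (hQR : B * Ω = Q * R)
    (hrank : (Ψᵀ * B * Ω).rank = r + p) :
    frob ((1 - (B * Ω) * pinv (Ψᵀ * B * Ω) * Ψᵀ) * B) ^ 2 =
      frob ((1 - Q * Qᵀ) * B) ^ 2 +
        frob (pinv (Ψᵀ * Q) * (Ψᵀ * Qp) * (Qpᵀ * B)) ^ 2 := by
  have hSR : Ψᵀ * B * Ω = (Ψᵀ * Q) * R := by
    rw [Matrix.mul_assoc, hQR, Matrix.mul_assoc]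
  have hrankS : (Ψᵀ * Q).rank = r + p := by
    rw [hSR, Matrix.rank_mul_eq_left_of_isUnit_det R (Ψᵀ * Q) hR] at hrank
    exact hrank
  have hG : IsUnit ((Ψᵀ * Q)ᵀ * (Ψᵀ * Q)).det := by
    apply isUnit_det_of_rank_eq_card
    rw [Matrix.rank_transpose_mul_self, hrankS, Fintype.card_fin]
  set N : Matrix (Fin (r + p)) (Fin (r + p + ℓ)) ℝ :=
    ((Ψᵀ * Q)ᵀ * (Ψᵀ * Q))⁻¹ * (Ψᵀ * Q)ᵀ with hNdef
  have hNS : N * (Ψᵀ * Q) = 1 := leftinv_mul _ hG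
  have hpinvS : pinv (Ψᵀ * Q) = N := pinv_eq_of_isMoorePenrose (isMP_fullColRank _ hG)
  have hpinvSR : pinv (Ψᵀ * B * Ω) = R⁻¹ * N := by
    rw [hSR]; exact pinv_eq_of_isMoorePenrose (isMP_fullColRank_mul _ _ hG hR)
  clear_value N
  clear hNdef
  have hQpQ : Qpᵀ * Q = 0 := by
    have := congrArg Matrix.transpose hQQp
    simpa [Matrix.transpose_mul] using this
  set X : Matrix (Fin (r + p)) (Fin n) ℝ := N * (Ψᵀ * Qp) * (Qpᵀ * B) with hX
  have hB : B = Q * (Qᵀ * B) + Qp * (Qpᵀ * B) := by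
    rw [← Matrix.mul_assoc, ← Matrix.mul_assoc, ← Matrix.add_mul, hcomplete,
      Matrix.one_mul]
  have hdecomp : (1 - (B * Ω) * pinv (Ψᵀ * B * Ω) * Ψᵀ) * B
      = Qp * (Qpᵀ * B) - Q * X := by
    rw [hpinvSR, hQR]
    have hQN : Q * R * (R⁻¹ * N) = Q * N := by
      rw [Matrix.mul_assoc Q R _, ← Matrix.mul_assoc R R⁻¹ N,
        Matrix.mul_nonsing_inv _ hR, Matrix.one_mul]
    rw [hQN, Matrix.sub_mul, Matrix.one_mul]
    have hPsiB : Ψᵀ * B = (Ψᵀ * Q) * (Qᵀ * B) + (Ψᵀ * Qp) * (Qpᵀ * B) := by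
      conv_lhs => rw [hB]
      rw [Matrix.mul_add]
      simp only [Matrix.mul_assoc]
    have hNPsiB : Q * N * Ψᵀ * B = Q * (Qᵀ * B) + Q * X := by
      rw [Matrix.mul_assoc (Q * N) Ψᵀ B, Matrix.mul_assoc Q N (Ψᵀ * B), hPsiB,
        Matrix.mul_add, Matrix.mul_add]
      congr 1
      · rw [← Matrix.mul_assoc N (Ψᵀ * Q) _, hNS, Matrix.one_mul]
      · rw [hX]; simp only [Matrix.mul_assoc]
    rw [hNPsiB]
    nth_rewrite 1 [hB]
    abel
  have hQQT : (1 - Q * Qᵀ) * B = Qp * (Qpᵀ * B) := by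
    rw [Matrix.sub_mul, Matrix.one_mul, Matrix.mul_assoc]
    nth_rewrite 1 [hB]
    abel
  rw [hdecomp, hQQT, hpinvS, ← hX]
  have horth : (Qp * (Qpᵀ * B))ᵀ * (Q * X) = 0 := by
    have : (Qp * (Qpᵀ * B))ᵀ * (Q * X) = (Qpᵀ * B)ᵀ * ((Qpᵀ * Q) * X) := by
      simp only [Matrix.transpose_mul, Matrix.transpose_transpose, Matrix.mul_assoc]
    rw [this, hQpQ, Matrix.zero_mul, Matrix.mul_zero]
  rw [frob_sub_sq _ _ horth]
  congr 1
  rw [frob_sq_eq_trace, frob_sq_eq_trace, Matrix.transpose_mul, Matrix.mul_assoc,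
    ← Matrix.mul_assoc Qᵀ Q X, hQ, Matrix.one_mul]
end

section
/- Let Ω ∈ ℝ^{n×(r+p)} be Gaussian, B a fixed matrix of compatible size, and E : [t₀, t₀+T] → ℝ^{m×n} continuous with E(t₀) = 0 and Lipschitz with constant L in the Frobenius norm. Then for any u ≥ 3, Pr[ sup_{t ∈ [t₀, t₀+T]} ‖E(t) Ω B‖_F > 2 L T ‖B‖_F (1 + 4u) ] ≤ e^{−u²/2}. -/
open MeasureTheory ProbabilityTheory Real Matrix
open scoped ENNReal NNReal

/-- A random matrix with i.i.d. standard Gaussian entries. -/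
def IsGaussianMatrix {α : Type*} [MeasurableSpace α] (μ : Measure α)
    {m n : ℕ} (Ω : α → Matrix (Fin m) (Fin n) ℝ) : Prop :=
  (∀ i j, Measurable fun a => Ω a i j) ∧
  (∀ i j, μ.map (fun a => Ω a i j) = gaussianReal 0 1) ∧
  iIndepFun
    (fun (p : Fin m × Fin n) a => Ω a p.1 p.2) μ

set_option maxHeartbeats 1000000


lemma gaussianPDFReal_mul_exp_lin (t x : ℝ) :
    Real.exp (t * x) * gaussianPDFReal 0 1 x = Real.exp (t^2/2) * gaussianPDFReal t 1 x := by
  simp only [gaussianPDFReal, NNReal.coe_one]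
  rw [mul_left_comm, ← Real.exp_add, mul_left_comm, ← Real.exp_add]
  congr 2
  ring

lemma lintegral_ofReal_gaussian (f : ℝ → ℝ) (hf : Measurable f) (hnn : ∀ x, 0 ≤ f x)
    (hint : Integrable (fun x => f x * gaussianPDFReal 0 1 x)) :
    ∫⁻ x, ENNReal.ofReal (f x) ∂(gaussianReal 0 1)
      = ENNReal.ofReal (∫ x, f x * gaussianPDFReal 0 1 x) := by
  calc ∫⁻ x, ENNReal.ofReal (f x) ∂(gaussianReal 0 1)
      = ∫⁻ x, ENNReal.ofReal (f x * gaussianPDFReal 0 1 x) := by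
        rw [gaussianReal_of_var_ne_zero 0 one_ne_zero,
          lintegral_withDensity_eq_lintegral_mul _ (measurable_gaussianPDF 0 1) hf.ennreal_ofReal]
        congr 1 with x
        simp only [Pi.mul_apply, gaussianPDF]
        rw [← ENNReal.ofReal_mul (gaussianPDFReal_nonneg 0 1 x), mul_comm]
    _ = ENNReal.ofReal (∫ x, f x * gaussianPDFReal 0 1 x) :=
        (ofReal_integral_eq_lintegral_ofReal hint
          (Filter.Eventually.of_forall fun x => mul_nonneg (hnn x)
            (gaussianPDFReal_nonneg 0 1 x))).symm

lemma lintegral_exp_lin_gaussian (t : ℝ) :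
    ∫⁻ x, ENNReal.ofReal (Real.exp (t * x)) ∂(gaussianReal 0 1)
      = ENNReal.ofReal (Real.exp (t^2/2)) := by
  have h : (fun x => Real.exp (t * x) * gaussianPDFReal 0 1 x)
      = fun x => Real.exp (t^2/2) * gaussianPDFReal t 1 x := by
    ext x; exact gaussianPDFReal_mul_exp_lin t x
  rw [lintegral_ofReal_gaussian _ (by fun_prop) (fun x => (Real.exp_pos _).le)
    (by rw [h]; exact (integrable_gaussianPDFReal t 1).const_mul _)]
  rw [h]
  rw [integral_const_mul, integral_gaussianPDFReal_eq_one t one_ne_zero, mul_one]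

lemma gaussianPDFReal_mul_exp_sq {w : ℝ} (hw : w < 1/2) (x : ℝ) :
    Real.exp (w * x^2) * gaussianPDFReal 0 1 x
      = (Real.sqrt (1 - 2*w))⁻¹
        * gaussianPDFReal 0 ⟨(1-2*w)⁻¹, by rw [inv_nonneg]; linarith⟩ x := by
  have h12 : (0:ℝ) < 1 - 2*w := by linarith
  simp only [gaussianPDFReal, NNReal.coe_mk, NNReal.coe_one]
  rw [mul_left_comm, ← Real.exp_add]
  have hcoef : (Real.sqrt (1 - 2*w))⁻¹ * (Real.sqrt (2*π*(1-2*w)⁻¹))⁻¹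
      = (Real.sqrt (2*π*1))⁻¹ := by
    rw [Real.sqrt_mul (by positivity), Real.sqrt_inv, mul_one]
    have : Real.sqrt (1-2*w) ≠ 0 := by positivity
    field_simp
  have hexp : w * x^2 + -(x-0)^2/(2*1) = -(x-0)^2/(2*(1-2*w)⁻¹) := by
    field_simp
    ring
  change _ = _ * ((Real.sqrt (2*π*(1-2*w)⁻¹))⁻¹ * Real.exp (-(x-0)^2/(2*(1-2*w)⁻¹)))
  rw [← mul_assoc, hcoef, hexp]

lemma lintegral_exp_sq_gaussian {w : ℝ} (hw : w < 1/2) :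
    ∫⁻ x, ENNReal.ofReal (Real.exp (w * x^2)) ∂(gaussianReal 0 1)
      = ENNReal.ofReal ((Real.sqrt (1 - 2*w))⁻¹) := by
  have h12 : (0:ℝ) < 1 - 2*w := by linarith
  have hne : (⟨(1-2*w)⁻¹, by rw [inv_nonneg]; linarith⟩ : NNReal) ≠ 0 := by
    intro hc
    have hc' : (1-2*w)⁻¹ = (0:ℝ) := congrArg (fun x : ℝ≥0 => (x:ℝ)) hc
    exact (inv_pos.mpr h12).ne' hc'
  have h : (fun x => Real.exp (w * x^2) * gaussianPDFReal 0 1 x)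
      = fun x => (Real.sqrt (1 - 2*w))⁻¹
          * gaussianPDFReal 0 ⟨(1-2*w)⁻¹, by rw [inv_nonneg]; linarith⟩ x := by
    ext x; exact gaussianPDFReal_mul_exp_sq hw x
  rw [lintegral_ofReal_gaussian _ (by fun_prop) (fun x => (Real.exp_pos _).le)
    (by rw [h]; exact (integrable_gaussianPDFReal _ _).const_mul _)]
  rw [h, integral_const_mul, integral_gaussianPDFReal_eq_one _ hne, mul_one]

lemma gauss_integral_exp (t : ℝ) :
    ∫ x, Real.exp (t * x) ∂(gaussianReal 0 1) = Real.exp (t^2/2) := by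
  rw [integral_eq_lintegral_of_nonneg_ae
    (Filter.Eventually.of_forall fun x => (Real.exp_pos _).le)
    ((by fun_prop : Measurable fun x : ℝ => Real.exp (t*x)).aestronglyMeasurable)]
  rw [lintegral_exp_lin_gaussian, ENNReal.toReal_ofReal (Real.exp_pos _).le]

lemma gauss_integrable_exp (t : ℝ) :
    Integrable (fun x => Real.exp (t * x)) (gaussianReal 0 1) := by
  refine ⟨(by fun_prop : Measurable fun x : ℝ => Real.exp (t*x)).aestronglyMeasurable, ?_⟩
  rw [hasFiniteIntegral_iff_ofReal (Filter.Eventually.of_forall fun x => (Real.exp_pos _).le)]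
  rw [lintegral_exp_lin_gaussian]
  exact ENNReal.ofReal_lt_top

section Iid

variable {α : Type*} [MeasurableSpace α] {μ : Measure α} [IsProbabilityMeasure μ]
  {ι : Type*} [Fintype ι] {g : ι → α → ℝ}

lemma iid_integrable_exp (hmeas : ∀ p, Measurable (g p))
    (hlaw : ∀ p, μ.map (g p) = gaussianReal 0 1) (p : ι) (t : ℝ) :
    Integrable (fun a => Real.exp (t * g p a)) μ := by
  have h := (integrable_map_measure
    (μ := μ) (f := g p) (g := fun x => Real.exp (t * x))
    (by rw [hlaw p];
        exact (by fun_prop : Measurable fun x : ℝ => Real.exp (t*x)).aestronglyMeasurable)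
    (hmeas p).aemeasurable).mp
  rw [hlaw p] at h
  exact h (gauss_integrable_exp t)

lemma iid_integral_exp (hmeas : ∀ p, Measurable (g p))
    (hlaw : ∀ p, μ.map (g p) = gaussianReal 0 1) (p : ι) (t : ℝ) :
    ∫ a, Real.exp (t * g p a) ∂μ = Real.exp (t^2/2) := by
  have h := integral_map (μ := μ) (φ := g p) (hmeas p).aemeasurable
    (f := fun x => Real.exp (t * x))
    (by rw [hlaw p];
        exact (by fun_prop : Measurable fun x : ℝ => Real.exp (t*x)).aestronglyMeasurable)
  rw [hlaw p] at h
  rw [← h, gauss_integral_exp]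

lemma iid_integral_exp_linear (hmeas : ∀ p, Measurable (g p))
    (hlaw : ∀ p, μ.map (g p) = gaussianReal 0 1)
    (hind : iIndepFun g μ) (c : ι → ℝ) (t : ℝ) :
    ∫ a, Real.exp (t * ∑ p, c p * g p a) ∂μ
      = Real.exp (t^2 * (∑ p, (c p)^2) / 2) := by
  set X : ι → α → ℝ := fun p a => c p * g p a with hX
  have hXmeas : ∀ p, Measurable (X p) := fun p => (hmeas p).const_mul _
  have hXind : iIndepFun X μ :=
    hind.comp (fun p x => c p * x) (fun p => measurable_id.const_mul _)
  have hmgf := hXind.mgf_sum hXmeas Finset.univ (t := t)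
  have hval : ∀ p, mgf (X p) μ t = Real.exp ((t * c p)^2/2) := by
    intro p
    have : (fun a => Real.exp (t * X p a)) = fun a => Real.exp ((t * c p) * g p a) := by
      ext a; rw [hX]; ring_nf
    rw [mgf, this]
    exact iid_integral_exp hmeas hlaw p (t * c p)
  have hsum : mgf (∑ p, X p) μ t = ∫ a, Real.exp (t * ∑ p, c p * g p a) ∂μ := by
    rw [mgf]
    congr 1 with a
    simp [hX, Finset.sum_apply]
  rw [← hsum, hmgf]
  rw [Finset.prod_congr rfl (fun p _ => hval p), ← Real.exp_sum]
  congr 1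
  rw [Finset.mul_sum, Finset.sum_div]
  exact Finset.sum_congr rfl fun p _ => by ring

lemma iid_integrable_exp_linear (hmeas : ∀ p, Measurable (g p))
    (hlaw : ∀ p, μ.map (g p) = gaussianReal 0 1)
    (hind : iIndepFun g μ) (c : ι → ℝ) (t : ℝ) :
    Integrable (fun a => Real.exp (t * ∑ p, c p * g p a)) μ := by
  set X : ι → α → ℝ := fun p a => c p * g p a with hX
  have hXmeas : ∀ p, Measurable (X p) := fun p => (hmeas p).const_mul _
  have hXind : iIndepFun X μ :=
    hind.comp (fun p x => c p * x) (fun p => measurable_id.const_mul _)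
  have h := hXind.integrable_exp_mul_sum hXmeas (s := Finset.univ) (t := t) ?_
  · have heq : (fun a => Real.exp (t * (∑ p, X p) a))
        = fun a => Real.exp (t * ∑ p, c p * g p a) := by
      ext a; simp [hX, Finset.sum_apply]
    rwa [heq] at h
  · intro p _
    have : (fun a => Real.exp (t * X p a)) = fun a => Real.exp ((t * c p) * g p a) := by
      ext a; rw [hX]; ring_nf
    rw [this]
    exact iid_integrable_exp hmeas hlaw p (t * c p)

lemma iid_lintegral_exp_linear (hmeas : ∀ p, Measurable (g p))
    (hlaw : ∀ p, μ.map (g p) = gaussianReal 0 1)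
    (hind : iIndepFun g μ) (c : ι → ℝ) (t : ℝ) :
    ∫⁻ a, ENNReal.ofReal (Real.exp (t * ∑ p, c p * g p a)) ∂μ
      = ENNReal.ofReal (Real.exp (t^2 * (∑ p, (c p)^2) / 2)) := by
  rw [← ofReal_integral_eq_lintegral_ofReal
    (iid_integrable_exp_linear hmeas hlaw hind c t)
    (Filter.Eventually.of_forall fun a => (Real.exp_pos _).le)]
  rw [iid_integral_exp_linear hmeas hlaw hind c t]

lemma iid_lintegral_exp_sq (hmeas : ∀ p, Measurable (g p))
    (hlaw : ∀ p, μ.map (g p) = gaussianReal 0 1)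
    (hind : iIndepFun g μ) (v : ι → ℝ) {s : ℝ} (hs : 0 ≤ s)
    (h2 : 2 * s * (∑ p, (v p)^2) < 1) :
    ∫⁻ a, ENNReal.ofReal (Real.exp (s * (∑ p, v p * g p a)^2)) ∂μ
      = ENNReal.ofReal ((Real.sqrt (1 - 2 * s * (∑ p, (v p)^2)))⁻¹) := by
  set σ2 : ℝ := ∑ p, (v p)^2 with hσ2
  have hσ2nn : 0 ≤ σ2 := Finset.sum_nonneg fun p _ => sq_nonneg _
  set c : ℝ := Real.sqrt (2 * s) with hc
  have hc2 : c^2 = 2 * s := Real.sq_sqrt (by linarith)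
  set X : α → ℝ := fun a => ∑ p, v p * g p a with hXdef
  have hXmeas : Measurable X := by
    apply Finset.measurable_sum
    exact fun p _ => (hmeas p).const_mul _
  have step1 : ∀ y : ℝ, ENNReal.ofReal (Real.exp (s * y^2))
      = ∫⁻ h, ENNReal.ofReal (Real.exp ((c * y) * h)) ∂(gaussianReal 0 1) := by
    intro y
    rw [lintegral_exp_lin_gaussian]
    congr 2
    rw [mul_pow, hc2]
    ring
  calc ∫⁻ a, ENNReal.ofReal (Real.exp (s * X a^2)) ∂μ
      = ∫⁻ a, ∫⁻ h, ENNReal.ofReal (Real.exp ((c * X a) * h)) ∂(gaussianReal 0 1) ∂μ := by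
        congr 1 with a
        exact step1 (X a)
    _ = ∫⁻ h, ∫⁻ a, ENNReal.ofReal (Real.exp ((c * X a) * h)) ∂μ ∂(gaussianReal 0 1) := by
        apply lintegral_lintegral_swap
        apply Measurable.aemeasurable
        apply Measurable.ennreal_ofReal
        apply Measurable.exp
        exact ((hXmeas.comp measurable_fst).const_mul c).mul measurable_snd
    _ = ∫⁻ h, ENNReal.ofReal (Real.exp ((c * h)^2 * σ2 / 2)) ∂(gaussianReal 0 1) := by
        congr 1 with h
        have : (fun a => ENNReal.ofReal (Real.exp ((c * X a) * h)))
            = fun a => ENNReal.ofReal (Real.exp ((c * h) * ∑ p, v p * g p a)) := by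
          ext a
          rw [hXdef]
          congr 1
          ring_nf
        rw [this, iid_lintegral_exp_linear hmeas hlaw hind v (c * h)]
    _ = ∫⁻ h, ENNReal.ofReal (Real.exp ((s * σ2) * h^2)) ∂(gaussianReal 0 1) := by
        congr 1 with h
        congr 2
        rw [mul_pow, hc2]
        ring
    _ = ENNReal.ofReal ((Real.sqrt (1 - 2 * (s * σ2)))⁻¹) := by
        apply lintegral_exp_sq_gaussian
        rw [mul_assoc] at h2
        linarith
    _ = ENNReal.ofReal ((Real.sqrt (1 - 2 * s * σ2))⁻¹) := by rw [← mul_assoc]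

lemma iid_quadform_tail (hmeas : ∀ p, Measurable (g p))
    (hlaw : ∀ p, μ.map (g p) = gaussianReal 0 1)
    (hind : iIndepFun g μ)
    {κ : Type*} [Fintype κ] (v : κ → ι → ℝ)
    {τ' q : ℝ} (hτ' : 0 < τ') (hτ : (∑ β, ∑ p, (v β p)^2) ≤ τ') (hq : 0 ≤ q) :
    μ {a | q < ∑ β, (∑ p, v β p * g p a)^2}
      ≤ ENNReal.ofReal (Real.sqrt 2 * Real.exp (-(q / (4 * τ')))) := by
  classical
  set τ : ℝ := ∑ β, ∑ p, (v β p)^2 with hτdef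
  have hσnn : ∀ β : κ, (0:ℝ) ≤ ∑ p, (v β p)^2 :=
    fun β => Finset.sum_nonneg fun p _ => sq_nonneg _
  have hτnn : 0 ≤ τ := Finset.sum_nonneg fun β _ => hσnn β
  set θ : ℝ := 1 / (4 * τ') with hθdef
  have hθpos : 0 < θ := by positivity
  set X : κ → α → ℝ := fun β a => ∑ p, v β p * g p a with hXdef
  have hXmeas : ∀ β, Measurable (X β) := fun β =>
    Finset.measurable_sum _ fun p _ => (hmeas p).const_mul _
  set Q : α → ℝ := fun a => ∑ β, (X β a)^2 with hQdef
  have hQmeas : Measurable Q := Finset.measurable_sum _ fun β _ => (hXmeas β).pow_const 2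
  rcases eq_or_lt_of_le hτnn with hτ0 | hτpos
  · -- degenerate case : all coefficients vanish
    have hv0 : ∀ β p, v β p = 0 := by
      intro β p
      have h1 : ∑ p, (v β p)^2 = 0 := by
        have := (Finset.sum_eq_zero_iff_of_nonneg
          (fun β _ => hσnn β)).mp hτ0.symm β (Finset.mem_univ β)
        exact this
      have := (Finset.sum_eq_zero_iff_of_nonneg
        (fun p _ => sq_nonneg (v β p))).mp h1 p (Finset.mem_univ p)
      exact (pow_eq_zero_iff two_ne_zero).mp this
    have : {a | q < Q a} = ∅ := by
      ext a
      simp only [Set.mem_setOf_eq, Set.mem_empty_iff_false, iff_false, not_lt]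
      have : Q a = 0 := by
        rw [hQdef]
        apply Finset.sum_eq_zero
        intro β _
        rw [hXdef]
        simp only []
        rw [Finset.sum_eq_zero fun p _ => by rw [hv0 β p, zero_mul]]
        norm_num
      rw [this]; exact hq
    rw [this]
    simp
  · -- main case
    have hθτ : θ * τ ≤ 1/4 := by
      rw [hθdef]
      rw [div_mul_eq_mul_div, one_mul, div_le_div_iff₀ (by positivity) (by norm_num)]
      linarith
    have hθτpos : 0 < θ * τ := mul_pos hθpos hτpos
    have h2θτ : 1 - 2 * (θ * τ) ≥ 1/2 := by linarith
    set C : ℝ≥0∞ := ENNReal.ofReal ((Real.sqrt (1 - 2 * (θ * τ)))⁻¹) with hCdef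
    -- the Hoelder bound on the mgf of Q
    have hmgfQ : ∫⁻ a, ENNReal.ofReal (Real.exp (θ * Q a)) ∂μ ≤ C := by
      have hpt : ∀ a, ENNReal.ofReal (Real.exp (θ * Q a))
          = ∏ β, (ENNReal.ofReal (Real.exp ((θ * τ / ∑ p, (v β p)^2) * (X β a)^2)))
              ^ ((∑ p, (v β p)^2) / τ) := by
        intro a
        rw [hQdef]
        simp only []
        rw [Finset.mul_sum, Real.exp_sum, ENNReal.ofReal_prod_of_nonneg
          (fun β _ => (Real.exp_pos _).le)]
        apply Finset.prod_congr rfl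
        intro β _
        by_cases hβ : (∑ p, (v β p)^2) = 0
        · have hX0 : X β a = 0 := by
            rw [hXdef]
            simp only []
            apply Finset.sum_eq_zero
            intro p _
            have := (Finset.sum_eq_zero_iff_of_nonneg
              (fun p _ => sq_nonneg (v β p))).mp hβ p (Finset.mem_univ p)
            rw [(pow_eq_zero_iff two_ne_zero).mp this, zero_mul]
          rw [hX0, hβ]
          norm_num
        · have hβpos : 0 < ∑ p, (v β p)^2 := lt_of_le_of_ne (hσnn β) (Ne.symm hβ)
          rw [ENNReal.ofReal_rpow_of_pos (Real.exp_pos _)]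
          congr 1
          rw [← Real.exp_mul]
          congr 1
          field_simp
      calc ∫⁻ a, ENNReal.ofReal (Real.exp (θ * Q a)) ∂μ
          = ∫⁻ a, ∏ β, (ENNReal.ofReal (Real.exp ((θ * τ / ∑ p, (v β p)^2) * (X β a)^2)))
              ^ ((∑ p, (v β p)^2) / τ) ∂μ := by
            congr 1 with a; exact hpt a
        _ ≤ ∏ β, (∫⁻ a, ENNReal.ofReal
              (Real.exp ((θ * τ / ∑ p, (v β p)^2) * (X β a)^2)) ∂μ)
              ^ ((∑ p, (v β p)^2) / τ) := by
            apply ENNReal.lintegral_prod_norm_pow_le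
            · intro β _
              exact ((((hXmeas β).pow_const 2).const_mul _).exp.ennreal_ofReal).aemeasurable
            · rw [← Finset.sum_div, ← hτdef, div_self hτpos.ne']
            · exact fun β _ => div_nonneg (hσnn β) hτnn
        _ ≤ ∏ β, C ^ ((∑ p, (v β p)^2) / τ) := by
            apply Finset.prod_le_prod' ; intro β _
            apply ENNReal.rpow_le_rpow _ (div_nonneg (hσnn β) hτnn)
            by_cases hβ : (∑ p, (v β p)^2) = 0
            · have : ∀ a : α, ENNReal.ofReal
                  (Real.exp ((θ * τ / ∑ p, (v β p)^2) * (X β a)^2)) = 1 := by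
                intro a
                rw [hβ, div_zero, zero_mul, Real.exp_zero, ENNReal.ofReal_one]
              simp only [this, lintegral_one, measure_univ, one_mul]
              rw [hCdef]
              rw [show (1:ℝ≥0∞) = ENNReal.ofReal 1 by simp]
              apply ENNReal.ofReal_le_ofReal
              have hsp : 0 < Real.sqrt (1 - 2*(θ*τ)) := Real.sqrt_pos.mpr (by linarith)
              have hs1 : Real.sqrt (1 - 2*(θ*τ)) ≤ 1 := by
                calc Real.sqrt (1 - 2*(θ*τ)) ≤ Real.sqrt 1 :=
                      Real.sqrt_le_sqrt (by linarith)
                  _ = 1 := Real.sqrt_one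
              calc (1:ℝ) = 1⁻¹ := by norm_num
                _ ≤ (Real.sqrt (1 - 2*(θ*τ)))⁻¹ := by
                    apply inv_anti₀ hsp hs1
            · have hβpos : 0 < ∑ p, (v β p)^2 := lt_of_le_of_ne (hσnn β) (Ne.symm hβ)
              have hs : 0 ≤ θ * τ / ∑ p, (v β p)^2 := by positivity
              have hprod : θ * τ / (∑ p, (v β p)^2) * (∑ p, (v β p)^2) = θ * τ := by
                field_simp
              have h2 : 2 * (θ * τ / ∑ p, (v β p)^2) * (∑ p, (v β p)^2) < 1 := by
                rw [mul_assoc, hprod]; linarith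
              rw [iid_lintegral_exp_sq hmeas hlaw hind (v β) hs h2]
              rw [hCdef]
              apply le_of_eq
              congr 2
              rw [mul_assoc, hprod]
        _ = C := by
            have hCpos : C ≠ 0 := by
              rw [hCdef]
              simp only [ne_eq, ENNReal.ofReal_eq_zero, not_le, inv_pos]
              apply Real.sqrt_pos.mpr; linarith
            have : ∀ β : κ, C ^ ((∑ p, (v β p)^2) / τ)
                = ENNReal.ofReal (((Real.sqrt (1 - 2 * (θ * τ)))⁻¹)
                    ^ ((∑ p, (v β p)^2) / τ)) := by
              intro β
              rw [hCdef, ENNReal.ofReal_rpow_of_pos]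
              rw [inv_pos]
              apply Real.sqrt_pos.mpr; linarith
            rw [Finset.prod_congr rfl fun β _ => this β,
              ← ENNReal.ofReal_prod_of_nonneg (fun β _ => Real.rpow_nonneg (by positivity) _)]
            rw [← Real.rpow_sum_of_pos (by positivity)]
            rw [← Finset.sum_div, ← hτdef, div_self hτpos.ne', Real.rpow_one, hCdef]
    -- Chernoff
    set c0 : ℝ≥0∞ := ENNReal.ofReal (Real.exp (θ * q)) with hc0def
    have hc0 : c0 ≠ 0 := by
      rw [hc0def]; simp [Real.exp_pos]
    have hc0top : c0 ≠ ⊤ := ENNReal.ofReal_ne_top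
    have hsub : {a | q < Q a} ⊆ {a | c0 ≤ ENNReal.ofReal (Real.exp (θ * Q a))} := by
      intro a ha
      simp only [Set.mem_setOf_eq] at ha ⊢
      rw [hc0def]
      apply ENNReal.ofReal_le_ofReal
      apply Real.exp_le_exp.mpr
      exact mul_le_mul_of_nonneg_left ha.le hθpos.le
    have hcher := mul_meas_ge_le_lintegral₀ (μ := μ)
      (((hQmeas.const_mul θ).exp.ennreal_ofReal).aemeasurable) c0
    calc μ {a | q < Q a} ≤ μ {a | c0 ≤ ENNReal.ofReal (Real.exp (θ * Q a))} :=
          measure_mono hsub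
      _ ≤ (∫⁻ a, ENNReal.ofReal (Real.exp (θ * Q a)) ∂μ) / c0 := by
          rw [ENNReal.le_div_iff_mul_le (Or.inl hc0) (Or.inl hc0top), mul_comm]
          exact hcher
      _ ≤ C / c0 := by
          apply ENNReal.div_le_div_right hmgfQ
      _ ≤ ENNReal.ofReal (Real.sqrt 2) / c0 := by
          apply ENNReal.div_le_div_right
          rw [hCdef]
          apply ENNReal.ofReal_le_ofReal
          have h1 : (1/2:ℝ) ≤ 1 - 2*(θ*τ) := by linarith
          have h3 : 0 < Real.sqrt (1/2) := Real.sqrt_pos.mpr (by norm_num)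
          calc (Real.sqrt (1 - 2*(θ*τ)))⁻¹ ≤ (Real.sqrt (1/2))⁻¹ :=
                inv_anti₀ h3 (Real.sqrt_le_sqrt h1)
            _ = Real.sqrt 2 := by
                rw [one_div, Real.sqrt_inv, inv_inv]
      _ = ENNReal.ofReal (Real.sqrt 2 * Real.exp (-(q / (4 * τ')))) := by
          rw [hc0def, ← ENNReal.ofReal_div_of_pos (Real.exp_pos _)]
          congr 1
          rw [div_eq_mul_inv, ← Real.exp_neg]
          congr 2
          rw [hθdef]
          field_simp

end Iid


section Frob

attribute [local instance] Matrix.frobeniusNormedAddCommGroup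

variable {m' n' k' : Type*} [Fintype m'] [Fintype n'] [Fintype k']

lemma frob_eq_norm (M : Matrix m' n' ℝ) : frob M = ‖M‖ := by
  rw [frob, Matrix.frobenius_norm_def, Real.sqrt_eq_rpow]
  congr 1
  apply Finset.sum_congr rfl; intro i _
  apply Finset.sum_congr rfl; intro j _
  rw [Real.norm_eq_abs, show (2:ℝ) = ((2:ℕ):ℝ) by norm_num, Real.rpow_natCast, sq_abs]

lemma frob_nonneg (M : Matrix m' n' ℝ) : 0 ≤ frob M := Real.sqrt_nonneg _

lemma frob_sq (M : Matrix m' n' ℝ) : frob M ^ 2 = ∑ i, ∑ j, (M i j) ^ 2 :=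
  Real.sq_sqrt (Finset.sum_nonneg fun i _ => Finset.sum_nonneg fun j _ => sq_nonneg _)

lemma frob_zero : frob (0 : Matrix m' n' ℝ) = 0 := by
  rw [frob_eq_norm]; exact norm_zero

lemma frob_eq_zero {M : Matrix m' n' ℝ} (h : frob M = 0) : M = 0 := by
  rw [frob_eq_norm] at h
  exact norm_eq_zero.mp h

lemma frob_mul_le (A : Matrix m' n' ℝ) (C : Matrix n' k' ℝ) :
    frob (A * C) ≤ frob A * frob C := by
  rw [frob_eq_norm, frob_eq_norm, frob_eq_norm]
  exact Matrix.frobenius_norm_mul A C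

lemma frob_triple_mul_le (A : Matrix m' n' ℝ) (W : Matrix n' k' ℝ) {s' : Type*} [Fintype s']
    (C : Matrix k' s' ℝ) :
    frob (A * W * C) ≤ frob A * (frob W * frob C) := by
  calc frob (A * W * C) ≤ frob (A * W) * frob C := frob_mul_le _ _
    _ ≤ frob A * frob W * frob C :=
        mul_le_mul_of_nonneg_right (frob_mul_le _ _) (frob_nonneg _)
    _ = frob A * (frob W * frob C) := by ring

lemma frob_sum_add_le {ι : Type*} (sfin : Finset ι) (f : ι → Matrix m' n' ℝ)
    (Z : Matrix m' n' ℝ) :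
    frob ((∑ j ∈ sfin, f j) + Z) ≤ (∑ j ∈ sfin, frob (f j)) + frob Z := by
  simp only [frob_eq_norm]
  calc ‖(∑ j ∈ sfin, f j) + Z‖ ≤ ‖∑ j ∈ sfin, f j‖ + ‖Z‖ := norm_add_le _ _
    _ ≤ (∑ j ∈ sfin, ‖f j‖) + ‖Z‖ := by
        gcongr
        exact norm_sum_le _ _

end Frob

lemma det_chain {m n k s : ℕ} (W : Matrix (Fin n) (Fin k) ℝ) (B : Matrix (Fin k) (Fin s) ℝ)
    (E : ℝ → Matrix (Fin m) (Fin n) ℝ) (t₀ T L : ℝ) (hT : 0 < T) (hL : 0 ≤ L)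
    (hE0 : E t₀ = 0)
    (hLip : ∀ s' ∈ Set.Icc t₀ (t₀ + T), ∀ t' ∈ Set.Icc t₀ (t₀ + T),
      frob (E s' - E t') ≤ L * |s' - t'|)
    (N : ℕ) (hN : 0 < N) {t : ℝ} (ht : t ∈ Set.Icc t₀ (t₀ + T)) :
    frob (E t * W * B)
      ≤ (∑ j ∈ Finset.range N,
          frob ((E (t₀ + ((j:ℝ)+1) * (T/N)) - E (t₀ + (j:ℝ) * (T/N))) * W * B))
        + L * (T/N) * (frob W * frob B) := by
  set δ : ℝ := T / N with hδdef
  have hδ : 0 < δ := by positivity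
  set pt : ℕ → ℝ := fun j => t₀ + j * δ with hptdef
  have hpt_mem : ∀ j : ℕ, j ≤ N → pt j ∈ Set.Icc t₀ (t₀ + T) := by
    intro j hj
    constructor
    · rw [hptdef]; simp only []
      nlinarith [Nat.cast_nonneg (α := ℝ) j, hδ.le]
    · rw [hptdef]; simp only []
      have hjN : (j:ℝ) ≤ (N:ℝ) := Nat.cast_le.mpr hj
      have hNδ : (N:ℝ) * δ = T := by
        rw [hδdef]
        field_simp
      nlinarith
  obtain ⟨ht₀, htT⟩ := ht
  set J : ℕ := ⌊(t - t₀) / δ⌋₊ with hJdef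
  have hJN : J ≤ N := by
    rw [hJdef]
    have h1 : (t - t₀)/δ ≤ (N:ℝ) := by
      rw [div_le_iff₀ hδ]
      have hNδ : (N:ℝ) * δ = T := by rw [hδdef]; field_simp
      linarith
    calc ⌊(t - t₀)/δ⌋₊ ≤ ⌊(N:ℝ)⌋₊ := Nat.floor_mono h1
      _ = N := Nat.floor_natCast N
  have hJle : pt J ≤ t := by
    have h1 : (J:ℝ) ≤ (t - t₀)/δ := Nat.floor_le (div_nonneg (by linarith) hδ.le)
    have h2 : (J:ℝ) * δ ≤ t - t₀ := (le_div_iff₀ hδ).mp h1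
    rw [hptdef]; simp only []
    linarith
  have hJup : t - pt J ≤ δ := by
    have h1 : (t - t₀)/δ < (J:ℝ) + 1 := Nat.lt_floor_add_one _
    rw [div_lt_iff₀ hδ] at h1
    rw [hptdef]; simp only []
    nlinarith
  have hptJ_mem : pt J ∈ Set.Icc t₀ (t₀ + T) := hpt_mem J hJN
  set Δ : ℕ → Matrix (Fin m) (Fin n) ℝ := fun j => E (pt (j+1)) - E (pt j) with hΔdef
  have hsum : ∑ j ∈ Finset.range J, Δ j = E (pt J) := by
    rw [hΔdef]
    rw [Finset.sum_range_sub (fun j => E (pt j))]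
    have : pt 0 = t₀ := by rw [hptdef]; simp
    rw [this, hE0, sub_zero]
  have hdecomp : E t * W * B
      = (∑ j ∈ Finset.range J, (Δ j * W * B)) + ((E t - E (pt J)) * W * B) := by
    have h2 : E t = (∑ j ∈ Finset.range J, Δ j) + (E t - E (pt J)) := by
      rw [hsum]; abel
    calc E t * W * B = ((∑ j ∈ Finset.range J, Δ j) + (E t - E (pt J))) * W * B := by
          rw [← h2]
      _ = _ := by
          rw [Matrix.add_mul, Matrix.sum_mul, Matrix.add_mul, Matrix.sum_mul]
  rw [hdecomp]
  calc frob ((∑ j ∈ Finset.range J, (Δ j * W * B)) + ((E t - E (pt J)) * W * B))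
      ≤ (∑ j ∈ Finset.range J, frob (Δ j * W * B)) + frob ((E t - E (pt J)) * W * B) :=
        frob_sum_add_le _ _ _
    _ ≤ (∑ j ∈ Finset.range N, frob (Δ j * W * B)) + frob ((E t - E (pt J)) * W * B) := by
        exact add_le_add_left (Finset.sum_le_sum_of_subset_of_nonneg
          (Finset.range_subset_range.mpr hJN) (fun j _ _ => frob_nonneg (Δ j * W * B))) _
    _ ≤ (∑ j ∈ Finset.range N, frob (Δ j * W * B)) + L * δ * (frob W * frob B) := by
        gcongr
        calc frob ((E t - E (pt J)) * W * B)
            ≤ frob (E t - E (pt J)) * (frob W * frob B) := frob_triple_mul_le _ _ _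
          _ ≤ (L * δ) * (frob W * frob B) := by
              apply mul_le_mul_of_nonneg_right _
                (mul_nonneg (frob_nonneg _) (frob_nonneg _))
              calc frob (E t - E (pt J)) ≤ L * |t - pt J| :=
                    hLip t ⟨ht₀, htT⟩ (pt J) hptJ_mem
                _ ≤ L * δ := by
                    apply mul_le_mul_of_nonneg_left _ hL
                    rw [abs_of_nonneg (by linarith)]
                    exact hJup
    _ = _ := by
        congr 1
        apply Finset.sum_congr rfl
        intro j _
        rw [hΔdef, hptdef]
        simp only []
        push_cast
        norm_num


lemma entry_as_sum {m n k s : ℕ} (A : Matrix (Fin m) (Fin n) ℝ)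
    (W : Matrix (Fin n) (Fin k) ℝ) (B : Matrix (Fin k) (Fin s) ℝ) (i : Fin m) (l : Fin s) :
    (A * W * B) i l = ∑ p : Fin n × Fin k, (A i p.1 * B p.2 l) * W p.1 p.2 := by
  rw [Matrix.mul_apply]
  simp_rw [Matrix.mul_apply, Finset.sum_mul]
  rw [Finset.sum_comm, Fintype.sum_prod_type]
  apply Finset.sum_congr rfl; intro c _
  apply Finset.sum_congr rfl; intro b _
  ring

lemma sqrt2_exp_bound {u c : ℝ} (hu : 3 ≤ u) (hc : u^2/2 + 2 ≤ c) :
    Real.sqrt 2 * Real.exp (-c) ≤ 1/2 * Real.exp (-u^2/2) := by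
  have h1 : Real.sqrt 2 ≤ 3/2 := by
    calc Real.sqrt 2 ≤ Real.sqrt ((3/2)^2) := Real.sqrt_le_sqrt (by norm_num)
      _ = 3/2 := Real.sqrt_sq (by norm_num)
  have h2 : Real.exp (-c) ≤ Real.exp (-(u^2/2+2)) := Real.exp_le_exp.mpr (by linarith)
  have h3 : Real.exp (-(u^2/2+2)) = Real.exp (-2) * Real.exp (-(u^2/2)) := by
    rw [← Real.exp_add]; ring_nf
  have h4 : Real.exp (-2) ≤ 1/3 := by
    rw [Real.exp_neg]
    have : (3:ℝ) ≤ Real.exp 2 := by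
      have := Real.add_one_le_exp (2:ℝ)
      linarith
    rw [inv_le_comm₀ (by positivity) (by norm_num)]
    simpa using this
  calc Real.sqrt 2 * Real.exp (-c) ≤ (3/2) * (Real.exp (-2) * Real.exp (-(u^2/2))) := by
        rw [← h3]
        apply mul_le_mul h1 h2 (Real.exp_pos _).le (by norm_num)
    _ ≤ (3/2) * ((1/3) * Real.exp (-(u^2/2))) := by
        apply mul_le_mul_of_nonneg_left _ (by norm_num)
        exact mul_le_mul_of_nonneg_right h4 (Real.exp_pos _).le
    _ = 1/2 * Real.exp (-(u^2/2)) := by ring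
    _ = 1/2 * Real.exp (-u^2/2) := by ring_nf

/-- Chaining bound: if `E : [t₀,t₀+T] → ℝ^{m×n}` is `L`-Lipschitz in the
Frobenius norm with `E(t₀) = 0`, `Ω` is a standard Gaussian matrix and `B` is
fixed, then for `u ≥ 3`,
`Pr[sup_t ‖E(t) Ω B‖_F > 2LT‖B‖_F(1+4u)] ≤ e^{−u²/2}`. -/
theorem chaining_sup_bound {α : Type*} [MeasurableSpace α] (μ : Measure α)
    [IsProbabilityMeasure μ] {m n k s : ℕ}
    (Ω : α → Matrix (Fin n) (Fin k) ℝ) (hΩ : IsGaussianMatrix μ Ω)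
    (B : Matrix (Fin k) (Fin s) ℝ)
    (E : ℝ → Matrix (Fin m) (Fin n) ℝ) (t₀ T L u : ℝ)
    (hT : 0 ≤ T) (hL : 0 ≤ L) (hu : 3 ≤ u)
    (hE0 : E t₀ = 0)
    (hLip : ∀ s' ∈ Set.Icc t₀ (t₀ + T), ∀ t' ∈ Set.Icc t₀ (t₀ + T),
      frob (E s' - E t') ≤ L * |s' - t'|) :
    μ {a | 2 * L * T * frob B * (1 + 4 * u) <
        ⨆ t : Set.Icc t₀ (t₀ + T), frob (E t * Ω a * B)} ≤
      ENNReal.ofReal (Real.exp (-u ^ 2 / 2)) := by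
  classical
  obtain ⟨hmeas, hlaw, hind⟩ := hΩ
  have hBnn : 0 ≤ frob B := frob_nonneg B
  have hu0 : (0:ℝ) < u := by linarith
  have hne : Nonempty (Set.Icc t₀ (t₀ + T)) := ⟨⟨t₀, le_refl _, by linarith⟩⟩
  by_cases hβ : L * T * frob B ≤ 0
  · -- degenerate case
    have hβ0 : L * T * frob B = 0 :=
      le_antisymm hβ (mul_nonneg (mul_nonneg hL hT) hBnn)
    have hz : ∀ a, ∀ t : Set.Icc t₀ (t₀ + T), frob (E t * Ω a * B) = 0 := by
      intro a t
      rcases mul_eq_zero.mp hβ0 with hLT | hB0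
      · have hEt : E (t : ℝ) = 0 := by
          rcases mul_eq_zero.mp hLT with hL0 | hT0
          · have h := hLip t t.2 t₀ ⟨le_refl _, by linarith⟩
            rw [hL0, zero_mul] at h
            have h0 : E (t:ℝ) - E t₀ = 0 := frob_eq_zero (le_antisymm h (frob_nonneg _))
            rw [hE0, sub_zero] at h0
            exact h0
          · have h1 := t.2.1
            have h2 : (t:ℝ) ≤ t₀ := by
              have := t.2.2
              linarith [this]
            have heq : (t:ℝ) = t₀ := le_antisymm h2 h1
            rw [congrArg E heq, hE0]
        rw [hEt, Matrix.zero_mul, Matrix.zero_mul]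
        exact frob_zero
      · have hB : B = 0 := frob_eq_zero hB0
        rw [hB, Matrix.mul_zero]
        exact frob_zero
    have hset : {a | 2 * L * T * frob B * (1 + 4 * u) <
        ⨆ t : Set.Icc t₀ (t₀ + T), frob (E t * Ω a * B)} = ∅ := by
      ext a
      simp only [Set.mem_setOf_eq, Set.mem_empty_iff_false, iff_false, not_lt]
      have hsup : (⨆ t : Set.Icc t₀ (t₀ + T), frob (E t * Ω a * B)) = 0 := by
        have heq : (fun t : Set.Icc t₀ (t₀ + T) => frob (E t * Ω a * B))
            = fun _ => (0:ℝ) := funext (hz a)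
        rw [heq, ciSup_const]
      rw [hsup, show 2 * L * T * frob B * (1 + 4 * u)
        = 2 * (L * T * frob B) * (1 + 4 * u) by ring, hβ0]
      simp
    rw [hset]
    simp
  · push_neg at hβ
    have hLne : L ≠ 0 := by intro h; rw [h] at hβ; simp at hβ
    have hTne : T ≠ 0 := by intro h; rw [h] at hβ; simp at hβ
    have hBne : frob B ≠ 0 := by intro h; rw [h] at hβ; simp at hβ
    have hL0 : 0 < L := lt_of_le_of_ne hL (Ne.symm hLne)
    have hT0 : 0 < T := lt_of_le_of_ne hT (Ne.symm hTne)
    have hB0 : 0 < frob B := lt_of_le_of_ne hBnn (Ne.symm hBne)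
    set NN : ℕ := n * k + 3 with hNNdef
    have hNpos : 0 < NN := by omega
    have hNR : (0:ℝ) < (NN:ℝ) := by exact_mod_cast hNpos
    have hN3 : (3:ℝ) ≤ (NN:ℝ) := by
      have : (3:ℕ) ≤ NN := by omega
      exact_mod_cast this
    set g : Fin n × Fin k → α → ℝ := fun p a => Ω a p.1 p.2 with hgdef
    have hgmeas : ∀ p, Measurable (g p) := fun p => hmeas p.1 p.2
    have hglaw : ∀ p, μ.map (g p) = gaussianReal 0 1 := fun p => hlaw p.1 p.2
    have hgind : iIndepFun g μ := hind
    set Δ : ℕ → Matrix (Fin m) (Fin n) ℝ :=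
      fun j => E (t₀ + ((j:ℝ)+1) * (T/(NN:ℝ))) - E (t₀ + (j:ℝ) * (T/(NN:ℝ))) with hΔdef
    set β : ℝ := L * T * frob B with hβdef
    have hβpos : 0 < β := hβ
    -- Lipschitz bound on increments
    have hΔfro : ∀ j, j < NN → frob (Δ j) ≤ L * (T/(NN:ℝ)) := by
      intro j hj
      have hδpos : (0:ℝ) < T/(NN:ℝ) := by positivity
      have hmem : ∀ i : ℕ, i ≤ NN → t₀ + (i:ℝ) * (T/(NN:ℝ)) ∈ Set.Icc t₀ (t₀ + T) := by
        intro i hi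
        have hiN : (i:ℝ) ≤ (NN:ℝ) := by exact_mod_cast hi
        constructor
        · nlinarith [Nat.cast_nonneg (α := ℝ) i]
        · have : (NN:ℝ) * (T/(NN:ℝ)) = T := by field_simp
          nlinarith
      have hm1 : t₀ + ((j:ℝ)+1) * (T/(NN:ℝ)) ∈ Set.Icc t₀ (t₀ + T) := by
        have h := hmem (j+1) (by omega)
        have hc : ((j+1:ℕ):ℝ) = (j:ℝ)+1 := by push_cast; ring
        rwa [hc] at h
      have h1 := hLip _ hm1 _ (hmem j (by omega))
      calc frob (Δ j) ≤ L * |(t₀ + ((j:ℝ)+1) * (T/(NN:ℝ))) - (t₀ + (j:ℝ) * (T/(NN:ℝ)))| := h1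
        _ = L * (T/(NN:ℝ)) := by
            rw [show (t₀ + ((j:ℝ)+1) * (T/(NN:ℝ))) - (t₀ + (j:ℝ) * (T/(NN:ℝ)))
              = T/(NN:ℝ) by ring, abs_of_pos hδpos]
    -- deterministic chaining bound
    set S : α → ℝ := fun a => ∑ j ∈ Finset.range NN, frob (Δ j * Ω a * B) with hSdef
    have hdet : ∀ a, (⨆ t : Set.Icc t₀ (t₀ + T), frob (E t * Ω a * B))
        ≤ S a + L * (T/(NN:ℝ)) * (frob (Ω a) * frob B) := by
      intro a
      apply ciSup_le
      intro t
      exact det_chain (Ω a) B E t₀ T L hT0 hL hE0 hLip NN hNpos t.2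
    -- event inclusion: first level
    have hsubset : {a | 2 * L * T * frob B * (1 + 4 * u) <
          ⨆ t : Set.Icc t₀ (t₀ + T), frob (E t * Ω a * B)}
        ⊆ {a | β * (2 + 7 * u) < S a} ∪ {a | (NN:ℝ) * u < frob (Ω a)} := by
      intro a ha
      simp only [Set.mem_setOf_eq] at ha
      simp only [Set.mem_setOf_eq, Set.mem_union]
      by_contra hcon
      push_neg at hcon
      obtain ⟨h1, h2⟩ := hcon
      have hd := hdet a
      have hδW : L * (T/(NN:ℝ)) * (frob (Ω a) * frob B) ≤ β * u := by
        have step : frob (Ω a) * frob B ≤ ((NN:ℝ) * u) * frob B :=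
          mul_le_mul_of_nonneg_right h2 hBnn
        calc L * (T/(NN:ℝ)) * (frob (Ω a) * frob B)
            ≤ L * (T/(NN:ℝ)) * (((NN:ℝ) * u) * frob B) := by
              apply mul_le_mul_of_nonneg_left step (by positivity)
          _ = β * u := by
              rw [hβdef]
              field_simp
      have ha' : 2 * L * T * frob B * (1 + 4 * u) = β * (2 + 8 * u) := by
        rw [hβdef]; ring
      rw [ha'] at ha
      have : (⨆ t : Set.Icc t₀ (t₀ + T), frob (E t * Ω a * B)) ≤ β * (2 + 8 * u) := by
        calc (⨆ t : Set.Icc t₀ (t₀ + T), frob (E t * Ω a * B))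
            ≤ S a + L * (T/(NN:ℝ)) * (frob (Ω a) * frob B) := hd
          _ ≤ β * (2 + 7 * u) + β * u := add_le_add h1 hδW
          _ = β * (2 + 8 * u) := by ring
      linarith
    -- the quadratic form for the sum part
    set v1 : (Fin NN × Fin m × Fin s) → (Fin n × Fin k) → ℝ :=
      fun bb p => Δ (bb.1 : ℕ) bb.2.1 p.1 * B p.2 bb.2.2 with hv1def
    have hQ1 : ∀ a, (∑ bb : Fin NN × Fin m × Fin s, (∑ p, v1 bb p * g p a)^2)
        = ∑ j ∈ Finset.range NN, frob (Δ j * Ω a * B)^2 := by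
      intro a
      rw [Fintype.sum_prod_type,
        ← Fin.sum_univ_eq_sum_range (fun j => frob (Δ j * Ω a * B)^2) NN]
      apply Finset.sum_congr rfl; intro j _
      rw [Fintype.sum_prod_type, frob_sq]
      apply Finset.sum_congr rfl; intro i _
      apply Finset.sum_congr rfl; intro l _
      congr 1
      exact (entry_as_sum (Δ (j:ℕ)) (Ω a) B i l).symm
    have hper : ∀ j : ℕ, (∑ il : Fin m × Fin s, ∑ p : Fin n × Fin k,
        (Δ j il.1 p.1 * B p.2 il.2)^2) = frob (Δ j)^2 * frob B^2 := by
      intro j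
      calc (∑ il : Fin m × Fin s, ∑ p : Fin n × Fin k, (Δ j il.1 p.1 * B p.2 il.2)^2)
          = ∑ i : Fin m, ∑ l : Fin s, ∑ c : Fin n, ∑ b : Fin k,
              (Δ j i c)^2 * (B b l)^2 := by
            rw [Fintype.sum_prod_type]
            apply Finset.sum_congr rfl; intro i _
            apply Finset.sum_congr rfl; intro l _
            rw [Fintype.sum_prod_type]
            apply Finset.sum_congr rfl; intro c _
            apply Finset.sum_congr rfl; intro b _
            ring
        _ = ∑ i : Fin m, ∑ c : Fin n, ∑ b : Fin k, ∑ l : Fin s,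
              (Δ j i c)^2 * (B b l)^2 := by
            apply Finset.sum_congr rfl; intro i _
            rw [Finset.sum_comm]
            apply Finset.sum_congr rfl; intro c _
            rw [Finset.sum_comm]
        _ = frob (Δ j)^2 * frob B^2 := by
            rw [frob_sq, frob_sq, Finset.sum_mul_sum]
            apply Finset.sum_congr rfl; intro i _
            rw [Finset.sum_comm]
            apply Finset.sum_congr rfl; intro b _
            rw [Finset.sum_mul]
            apply Finset.sum_congr rfl; intro c _
            rw [Finset.mul_sum]
    have hτ1 : (∑ bb : Fin NN × Fin m × Fin s, ∑ p : Fin n × Fin k, (v1 bb p)^2)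
        ≤ β^2 / (NN:ℝ) := by
      have hred : (∑ bb : Fin NN × Fin m × Fin s, ∑ p : Fin n × Fin k, (v1 bb p)^2)
          = ∑ j : Fin NN, frob (Δ (j:ℕ))^2 * frob B^2 := by
        rw [Fintype.sum_prod_type]
        apply Finset.sum_congr rfl; intro j _
        exact hper (j:ℕ)
      rw [hred]
      have hbound : ∀ j : Fin NN, frob (Δ (j:ℕ))^2 * frob B^2
          ≤ (L*(T/(NN:ℝ)))^2 * frob B^2 := by
        intro j
        apply mul_le_mul_of_nonneg_right _ (sq_nonneg _)
        have h := hΔfro (j:ℕ) j.isLt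
        have hnn := frob_nonneg (Δ (j:ℕ))
        nlinarith
      calc (∑ j : Fin NN, frob (Δ (j:ℕ))^2 * frob B^2)
          ≤ ∑ _j : Fin NN, (L*(T/(NN:ℝ)))^2 * frob B^2 :=
            Finset.sum_le_sum (fun j _ => hbound j)
        _ = (NN:ℝ) * ((L*(T/(NN:ℝ)))^2 * frob B^2) := by
            rw [Finset.sum_const, Finset.card_univ, Fintype.card_fin, nsmul_eq_mul]
        _ = β^2/(NN:ℝ) := by
            rw [hβdef]
            field_simp
    set q1 : ℝ := β^2 * (2+7*u)^2 / (NN:ℝ) with hq1def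
    have hτ'1 : (0:ℝ) < β^2/(NN:ℝ) := by positivity
    have hq1nn : (0:ℝ) ≤ q1 := by rw [hq1def]; positivity
    have htail1 := iid_quadform_tail hgmeas hglaw hgind v1 hτ'1 hτ1 hq1nn
    have hexp1 : q1 / (4 * (β^2/(NN:ℝ))) = (2+7*u)^2/4 := by
      rw [hq1def]
      field_simp
    rw [hexp1] at htail1
    have hincl1 : {a | β*(2+7*u) < S a}
        ⊆ {a | q1 < ∑ bb : Fin NN × Fin m × Fin s, (∑ p, v1 bb p * g p a)^2} := by
      intro a h
      simp only [Set.mem_setOf_eq] at h ⊢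
      rw [hQ1 a]
      have h0 : 0 < β * (2+7*u) := mul_pos hβpos (by linarith)
      have hsq : (β*(2+7*u))^2 < (S a)^2 := by nlinarith
      have hS2 : (S a)^2 ≤ (NN:ℝ) * ∑ j ∈ Finset.range NN, frob (Δ j * Ω a * B)^2 := by
        have hcs := sq_sum_le_card_mul_sum_sq (s := Finset.range NN)
          (f := fun j => frob (Δ j * Ω a * B))
        rw [hSdef]
        simp only [Finset.card_range] at hcs
        exact_mod_cast hcs
      rw [hq1def, div_lt_iff₀ hNR]
      nlinarith
    -- the quadratic form for the norm of Omega
    set v2 : (Fin n × Fin k) → (Fin n × Fin k) → ℝ :=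
      fun bb p => if bb = p then 1 else 0 with hv2def
    have hQ2 : ∀ a, (∑ bb : Fin n × Fin k, (∑ p, v2 bb p * g p a)^2)
        = frob (Ω a)^2 := by
      intro a
      calc (∑ bb : Fin n × Fin k, (∑ p, v2 bb p * g p a)^2)
          = ∑ bb : Fin n × Fin k, (g bb a)^2 := by
            apply Finset.sum_congr rfl; intro bb _
            congr 1
            calc (∑ p, v2 bb p * g p a) = ∑ p, if bb = p then g p a else 0 := by
                  apply Finset.sum_congr rfl; intro p _
                  rw [hv2def]
                  simp only []
                  rw [ite_mul, one_mul, zero_mul]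
              _ = g bb a := by rw [Finset.sum_ite_eq]; simp
        _ = frob (Ω a)^2 := by
            rw [frob_sq, Fintype.sum_prod_type]
    have hτ2 : (∑ bb : Fin n × Fin k, ∑ p : Fin n × Fin k, (v2 bb p)^2) ≤ (NN:ℝ) := by
      have hone : ∀ bb : Fin n × Fin k, (∑ p, (v2 bb p)^2) = 1 := by
        intro bb
        calc (∑ p, (v2 bb p)^2) = ∑ p, if bb = p then (1:ℝ) else 0 := by
              apply Finset.sum_congr rfl; intro p _
              rw [hv2def]
              simp only []
              by_cases hbp : bb = p <;> simp [hbp]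
          _ = 1 := by rw [Finset.sum_ite_eq]; simp
      rw [Finset.sum_congr rfl (fun bb _ => hone bb), Finset.sum_const, Finset.card_univ]
      simp only [Fintype.card_prod, Fintype.card_fin, nsmul_eq_mul, mul_one]
      rw [hNNdef]
      push_cast
      linarith
    set q2 : ℝ := (NN:ℝ)^2 * u^2 with hq2def
    have hq2nn : (0:ℝ) ≤ q2 := by rw [hq2def]; positivity
    have htail2 := iid_quadform_tail hgmeas hglaw hgind v2 hNR hτ2 hq2nn
    have hexp2 : q2 / (4 * (NN:ℝ)) = (NN:ℝ) * u^2 / 4 := by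
      rw [hq2def]
      field_simp
    rw [hexp2] at htail2
    have hincl2 : {a | (NN:ℝ)*u < frob (Ω a)}
        ⊆ {a | q2 < ∑ bb : Fin n × Fin k, (∑ p, v2 bb p * g p a)^2} := by
      intro a h
      simp only [Set.mem_setOf_eq] at h ⊢
      rw [hQ2 a, hq2def]
      have h0 : 0 ≤ (NN:ℝ)*u := by positivity
      nlinarith
    -- combine everything
    calc μ {a | 2 * L * T * frob B * (1 + 4 * u) <
          ⨆ t : Set.Icc t₀ (t₀ + T), frob (E t * Ω a * B)}
        ≤ μ ({a | q1 < ∑ bb : Fin NN × Fin m × Fin s, (∑ p, v1 bb p * g p a)^2}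
            ∪ {a | q2 < ∑ bb : Fin n × Fin k, (∑ p, v2 bb p * g p a)^2}) :=
          measure_mono (hsubset.trans (Set.union_subset_union hincl1 hincl2))
      _ ≤ μ {a | q1 < ∑ bb : Fin NN × Fin m × Fin s, (∑ p, v1 bb p * g p a)^2}
          + μ {a | q2 < ∑ bb : Fin n × Fin k, (∑ p, v2 bb p * g p a)^2} :=
          measure_union_le _ _
      _ ≤ ENNReal.ofReal (Real.sqrt 2 * Real.exp (-((2+7*u)^2/4)))
          + ENNReal.ofReal (Real.sqrt 2 * Real.exp (-((NN:ℝ)*u^2/4))) :=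
          add_le_add htail1 htail2
      _ ≤ ENNReal.ofReal (Real.exp (-u ^ 2 / 2)) := by
          rw [← ENNReal.ofReal_add (by positivity) (by positivity)]
          apply ENNReal.ofReal_le_ofReal
          have hb1 := sqrt2_exp_bound hu (show u^2/2 + 2 ≤ (2+7*u)^2/4 by nlinarith)
          have hb2 := sqrt2_exp_bound hu
            (show u^2/2 + 2 ≤ (NN:ℝ)*u^2/4 by nlinarith [hN3])
          have heq : Real.exp (-u ^ 2 / 2) = Real.exp (-u^2/2) := by norm_num
          linarith [hb1, hb2]
end
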